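/- arXiv:0712.2637 — 8 statements merged into one kernel-verified Lean document; each statement's English description precedes it below -/
import Mathlib

section
/- For α ∈ (0,1) and every natural number k ≥ 1, the integral ∫₀¹ (1 - x^{αk}) α x^{α-1}(1-x)^{-α-1} dx is finite and strictly positive. -/
/-!
Since `1 - x ^ β ≤ max β 1 * (1 - x)` on `[0, 1]` (Bernoulli's inequality for `β ≥ 1`), the
integrand is dominated by a multiple of the Beta integrand `x ^ (α - 1) * (1 - x) ^ (-α)`,
which is integrable because both exponents exceed `-1`. The integrand is positive on `(0, 1)`,
so its integral is positive.
-/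

open MeasureTheory Real Set

theorem integrableOn_rpow_mul_one_sub_rpow {p q : ℝ} (hp : -1 < p) (hq : -1 < q) :
    IntegrableOn (fun x : ℝ => x ^ p * (1 - x) ^ q) (Ioo 0 1) := by
  have hbeta := Complex.betaIntegral_convergent (u := (p + 1 : ℝ)) (v := (q + 1 : ℝ))
    (by simp; linarith) (by simp; linarith)
  rw [intervalIntegrable_iff_integrableOn_Ioo_of_le zero_le_one] at hbeta
  refine IntegrableOn.congr_fun hbeta.re (fun x hx => ?_) measurableSet_Ioo
  have h1x : 0 ≤ 1 - x := by linarith [hx.2]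
  simp only [RCLike.re_to_complex, Complex.ofReal_add, Complex.ofReal_one, add_sub_cancel_right]
  rw [← Complex.ofReal_one, ← Complex.ofReal_sub, ← Complex.ofReal_cpow hx.1.le,
    ← Complex.ofReal_cpow h1x, ← Complex.ofReal_mul, Complex.ofReal_re]

theorem one_sub_rpow_le_mul_one_sub {x β : ℝ} (hx0 : 0 ≤ x) (hx1 : x ≤ 1) :
    1 - x ^ β ≤ max β 1 * (1 - x) := by
  rcases le_total β 1 with hβ1 | hβ1
  · have := self_le_rpow_of_le_one hx0 hx1 hβ1
    rw [max_eq_right hβ1]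
    linarith
  · have := one_add_mul_self_le_rpow_one_add (s := x - 1) (by linarith) hβ1
    rw [add_sub_cancel] at this
    rw [max_eq_left hβ1]
    linarith

theorem integrableOn_one_sub_rpow_mul_rpow_mul_one_sub_rpow {β p q : ℝ} (hβ : 0 ≤ β)
    (hp : -1 < p) (hq : -2 < q) :
    IntegrableOn (fun x : ℝ => (1 - x ^ β) * x ^ p * (1 - x) ^ q) (Ioo 0 1) := by
  refine Integrable.mono'
    ((integrableOn_rpow_mul_one_sub_rpow hp (by linarith : -1 < q + 1)).const_mul (max β 1))
    (by fun_prop) ((ae_restrict_iff' measurableSet_Ioo).2 (ae_of_all _ fun x hx => ?_))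
  have h1x : 0 < 1 - x := by linarith [hx.2]
  have hxp : 0 ≤ x ^ p := rpow_nonneg hx.1.le p
  have hxβ : x ^ β ≤ 1 := rpow_le_one hx.1.le hx.2.le hβ
  calc ‖(1 - x ^ β) * x ^ p * (1 - x) ^ q‖ = (1 - x ^ β) * x ^ p * (1 - x) ^ q := by
        rw [Real.norm_of_nonneg (by have := rpow_pos_of_pos h1x q; positivity)]
    _ ≤ max β 1 * (1 - x) * x ^ p * (1 - x) ^ q := by
        gcongr
        exact one_sub_rpow_le_mul_one_sub hx.1.le hx.2.le
    _ = max β 1 * (x ^ p * (1 - x) ^ (q + 1)) := by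
        rw [rpow_add_one h1x.ne']
        ring

theorem setIntegral_pos_of_pos {X : Type*} [MeasurableSpace X] {μ : Measure X} {s : Set X}
    {f : X → ℝ} (hs : MeasurableSet s) (hμs : μ s ≠ 0) (hf : IntegrableOn f s μ)
    (hpos : ∀ x ∈ s, 0 < f x) : 0 < ∫ x in s, f x ∂μ := by
  rw [setIntegral_pos_iff_support_of_nonneg_ae
    ((ae_restrict_iff' hs).2 (ae_of_all _ fun x hx => (hpos x hx).le)) hf,
    inter_eq_self_of_subset_right (show s ⊆ Function.support f from fun x hx => (hpos x hx).ne')]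
  exact pos_iff_ne_zero.2 hμs

theorem stmt_3 (α : ℝ) (hα : α ∈ Set.Ioo (0:ℝ) 1) (k : ℕ) (hk : 1 ≤ k) :
    MeasureTheory.IntegrableOn
        (fun x : ℝ => (1 - x ^ (α * k)) * α * x ^ (α - 1) * (1 - x) ^ (-α - 1)) (Set.Ioo 0 1) ∧
      0 < ∫ x in Set.Ioo (0:ℝ) 1, (1 - x ^ (α * k)) * α * x ^ (α - 1) * (1 - x) ^ (-α - 1) := by
  obtain ⟨hα0, hα1⟩ := hα
  have hβ : 0 < α * k := mul_pos hα0 (by exact_mod_cast hk)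
  have hint : IntegrableOn
      (fun x : ℝ => (1 - x ^ (α * k)) * α * x ^ (α - 1) * (1 - x) ^ (-α - 1)) (Ioo 0 1) := by
    have := (integrableOn_one_sub_rpow_mul_rpow_mul_one_sub_rpow hβ.le
      (by linarith : -1 < α - 1) (by linarith : -2 < -α - 1)).const_mul α
    exact IntegrableOn.congr_fun this (fun x _ => by ring) measurableSet_Ioo
  refine ⟨hint, setIntegral_pos_of_pos measurableSet_Ioo (by simp) hint fun x hx => ?_⟩
  have h_one_sub : 0 < 1 - x ^ (α * k) := sub_pos.2 (rpow_lt_one hx.1.le hx.2 hβ)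
  have h_left := rpow_pos_of_pos hx.1 (α - 1)
  have h_right := rpow_pos_of_pos (sub_pos.2 hx.2) (-α - 1)
  positivity
end

section
/- For α ∈ (0,1) and any y ∈ (0,1) and any measurable function g : ℝ → ℝ with |g(x)| ≤ M|x|, one has ∫_ℝ g(x) K(y; dx) = (1-y)^{-α} ∫₀¹ g(x(1-y)) (1-x)^{α-1} α x^{-α-1} dx, and consequently ∫_ℝ |x| K(y; dx) ≤ α B(α, 1-α), uniformly in y ∈ (0,1). -/
/-! Substituting `x = u (1 - y)` turns `K(y; ·)` into `(1 - y)^(-α)` times the kernel at `y = 0`,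
which gives the formula for `∫ g dK(y; ·)`. For `g = |·|` the weight `u · u^(-α-1) (1-u)^(α-1)`
is, after `u ↦ 1 - u`, the beta density with parameters `(α, 1 - α)`, so the first moment equals
`(1 - y)^(1-α) α B(α, 1 - α) ≤ α B(α, 1 - α)`. -/

open MeasureTheory Real Set

section Substitution

variable {E : Type*} [NormedAddCommGroup E] [NormedSpace ℝ E]

theorem setIntegral_Ioo_zero_eq_smul_setIntegral_comp_mul_right (f : ℝ → E) {c : ℝ}
    (hc : 0 < c) :
    ∫ x in Ioo (0:ℝ) c, f x = c • ∫ u in Ioo (0:ℝ) 1, f (u * c) := by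
  rw [← integral_Ioc_eq_integral_Ioo, ← integral_Ioc_eq_integral_Ioo,
    ← intervalIntegral.integral_of_le hc.le, ← intervalIntegral.integral_of_le zero_le_one,
    intervalIntegral.integral_comp_mul_right f hc.ne', smul_inv_smul₀ hc.ne', zero_mul, one_mul]

theorem setIntegral_Ioo_zero_one_comp_one_sub (f : ℝ → E) :
    ∫ u in Ioo (0:ℝ) 1, f (1 - u) = ∫ u in Ioo (0:ℝ) 1, f u := by
  rw [← integral_Ioc_eq_integral_Ioo, ← integral_Ioc_eq_integral_Ioo,
    ← intervalIntegral.integral_of_le zero_le_one, intervalIntegral.integral_comp_sub_left f 1,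
    sub_self, sub_zero, intervalIntegral.integral_of_le zero_le_one]

end Substitution

theorem setIntegral_kernel_eq_rpow_mul (α : ℝ) (g : ℝ → ℝ) {c : ℝ} (hc : 0 < c) :
    ∫ x in Ioo (0:ℝ) c, g x * ((1 - x / c) ^ (α - 1) * (α * x ^ (-α - 1)))
      = c ^ (-α) * ∫ u in Ioo (0:ℝ) 1, g (u * c) * ((1 - u) ^ (α - 1) * (α * u ^ (-α - 1))) := by
  rw [setIntegral_Ioo_zero_eq_smul_setIntegral_comp_mul_right _ hc, smul_eq_mul]
  have hscale : ∀ u ∈ Ioo (0:ℝ) 1,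
      g (u * c) * ((1 - u * c / c) ^ (α - 1) * (α * (u * c) ^ (-α - 1)))
        = c ^ (-α - 1) * (g (u * c) * ((1 - u) ^ (α - 1) * (α * u ^ (-α - 1)))) := by
    intro u hu
    rw [mul_div_cancel_right₀ u hc.ne', mul_rpow hu.1.le hc.le]
    ring
  rw [setIntegral_congr_fun measurableSet_Ioo hscale, integral_const_mul, ← mul_assoc,
    rpow_sub_one hc.ne', mul_div_cancel₀ _ hc.ne']

theorem setIntegral_abs_mul_kernel_eq (α : ℝ) {c : ℝ} (hc : 0 < c) :
    ∫ x in Ioo (0:ℝ) c, |x| * ((1 - x / c) ^ (α - 1) * (α * x ^ (-α - 1)))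
      = c ^ (1 - α) * (α * ∫ v in Ioo (0:ℝ) 1, v ^ (α - 1) * (1 - v) ^ ((1 - α) - 1)) := by
  have hbeta : ∀ u ∈ Ioo (0:ℝ) 1,
      |u * c| * ((1 - u) ^ (α - 1) * (α * u ^ (-α - 1)))
        = c * α * ((1 - u) ^ (α - 1) * (1 - (1 - u)) ^ ((1 - α) - 1)) := by
    intro u hu
    have hu_pow : u * u ^ (-α - 1) = u ^ (-α) := by
      rw [rpow_sub_one hu.1.ne', mul_div_cancel₀ _ hu.1.ne']
    rw [abs_of_pos (mul_pos hu.1 hc), sub_sub_cancel, sub_sub_cancel_left, ← hu_pow]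
    ring
  rw [setIntegral_kernel_eq_rpow_mul α _ hc, setIntegral_congr_fun measurableSet_Ioo hbeta,
    integral_const_mul, setIntegral_Ioo_zero_one_comp_one_sub
      (fun v ↦ v ^ (α - 1) * (1 - v) ^ ((1 - α) - 1)),
    show 1 - α = -α + 1 by ring, rpow_add_one hc.ne']
  ring

theorem stmt_5_general (α : ℝ) (hα : α ∈ Set.Ioo (0:ℝ) 1)
    (g : ℝ → ℝ)
    (y : ℝ) (hy : y ∈ Set.Ioo (0:ℝ) 1) :
    (∫ x in Set.Ioo (0:ℝ) (1 - y), g x * ((1 - x / (1 - y)) ^ (α - 1) * (α * x ^ (-α - 1))))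
        = (1 - y) ^ (-α) *
            ∫ x in Set.Ioo (0:ℝ) 1, g (x * (1 - y)) * ((1 - x) ^ (α - 1) * (α * x ^ (-α - 1)))
      ∧ (∫ x in Set.Ioo (0:ℝ) (1 - y), |x| * ((1 - x / (1 - y)) ^ (α - 1) * (α * x ^ (-α - 1))))
          ≤ α * ∫ v in Set.Ioo (0:ℝ) 1, v ^ (α - 1) * (1 - v) ^ ((1 - α) - 1) := by
  have hc : 0 < 1 - y := sub_pos.mpr hy.2
  refine ⟨setIntegral_kernel_eq_rpow_mul α g hc, ?_⟩
  have hbeta_nonneg : 0 ≤ ∫ v in Ioo (0:ℝ) 1, v ^ (α - 1) * (1 - v) ^ ((1 - α) - 1) :=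
    setIntegral_nonneg measurableSet_Ioo fun v hv ↦
      mul_nonneg (rpow_nonneg hv.1.le _) (rpow_nonneg (sub_nonneg.mpr hv.2.le) _)
  rw [setIntegral_abs_mul_kernel_eq α hc]
  exact mul_le_of_le_one_left (mul_nonneg hα.1.le hbeta_nonneg)
    (rpow_le_one hc.le (by linarith [hy.1]) (by linarith [hα.2]))

theorem stmt_5 (α M : ℝ) (hα : α ∈ Set.Ioo (0:ℝ) 1) (hM : 0 < M)
    (g : ℝ → ℝ) (hg : Measurable g) (hgb : ∀ x, |g x| ≤ M * |x|)
    (y : ℝ) (hy : y ∈ Set.Ioo (0:ℝ) 1) :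
    (∫ x in Set.Ioo (0:ℝ) (1 - y), g x * ((1 - x / (1 - y)) ^ (α - 1) * (α * x ^ (-α - 1))))
        = (1 - y) ^ (-α) *
            ∫ x in Set.Ioo (0:ℝ) 1, g (x * (1 - y)) * ((1 - x) ^ (α - 1) * (α * x ^ (-α - 1)))
      ∧ (∫ x in Set.Ioo (0:ℝ) (1 - y), |x| * ((1 - x / (1 - y)) ^ (α - 1) * (α * x ^ (-α - 1))))
          ≤ α * ∫ v in Set.Ioo (0:ℝ) 1, v ^ (α - 1) * (1 - v) ^ ((1 - α) - 1) :=
  stmt_5_general α hα g y hy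
end

section
/- Let L : (0,∞) → (0,∞) be slowly varying at infinity. Then for every ε > 0 there exists x₀ > 0 such that L(x)/L(y) ≤ (1+ε) · (max(x/y, y/x))^{ε} for all x ≥ x₀ and y ≥ x₀. (Potter's bounds.) -/
/-! The function `h t = log (L (exp t))` satisfies `h (t + u) - h t → 0` for every `u`. By the
uniform convergence theorem this holds uniformly for `u ∈ [0, 1]`: otherwise there are
`t_n → ∞` and `u_n ∈ [0, 1]` with `|h (t_n + u_n) - h t_n| > δ`, while, by Egorov's theorem,
for large `n` both `v ↦ h (t_n + v) - h t_n` and `v ↦ h (t_n + u_n + v) - h (t_n + u_n)` are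
small on most of `[0, 2]`; some `v` is good for the first function and `v - u_n` for the
second, and the triangle inequality through `h (t_n + v)` gives a contradiction. Chaining unit
steps then gives `|h s - h t| ≤ δ (|s - t| + 1)` for large `s, t`, which with
`δ = min ε (log (1 + ε))` is Potter's bound after exponentiating. -/

open MeasureTheory Real Set Filter Topology

theorem exists_notMem_and_sub_notMem {B : Set ℝ} {a b u : ℝ} (hu : 0 ≤ u)
    (hB : 2 * volume (B ∩ Icc a b) < ENNReal.ofReal (b - a - u)) : ∃ v, v ∉ B ∧ v - u ∉ B := by
  by_contra! hcover
  have hsub : Icc (a + u) b ⊆ (B ∩ Icc a b) ∪ (· + -u) ⁻¹' (B ∩ Icc a b) := by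
    rintro v ⟨hav, hvb⟩
    by_cases hv : v ∈ B
    · exact Or.inl ⟨hv, by linarith, hvb⟩
    · exact Or.inr ⟨hcover v hv, by linarith, by linarith⟩
  have hle : ENNReal.ofReal (b - a - u) ≤ 2 * volume (B ∩ Icc a b) :=
    calc ENNReal.ofReal (b - a - u) = volume (Icc (a + u) b) := by
          rw [Real.volume_Icc, sub_sub]
      _ ≤ volume (B ∩ Icc a b) + volume ((· + -u) ⁻¹' (B ∩ Icc a b)) :=
          (measure_mono hsub).trans (measure_union_le _ _)
      _ = 2 * volume (B ∩ Icc a b) := by rw [measure_preimage_add_right, two_mul]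
  exact hle.not_gt hB

section AdditiveForm

variable {h : ℝ → ℝ}

theorem exists_abs_add_sub_lt (hm : Measurable h)
    (hconv : ∀ u, Tendsto (fun t => h (t + u) - h t) atTop (𝓝 0)) {t u : ℕ → ℝ}
    (ht_top : Tendsto t atTop atTop) (hu : ∀ n, u n ∈ Icc (0 : ℝ) 1) {δ : ℝ} (hδ : 0 < δ) :
    ∃ n, |h (t n + u n) - h (t n)| < δ := by
  have htu_top : Tendsto (fun n => t n + u n) atTop atTop :=
    tendsto_atTop_mono (fun n => le_add_of_nonneg_right (hu n).1) ht_top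
  set f : ℕ → ℝ → ℝ := fun n v => |h (t n + v) - h (t n)| + |h (t n + u n + v) - h (t n + u n)|
  have hf : TendstoInMeasure (volume.restrict (Icc 0 2)) f atTop 0 := by
    refine tendstoInMeasure_of_tendsto_ae (fun n => Measurable.aestronglyMeasurable ?_)
      (ae_of_all _ fun v => ?_)
    · fun_prop
    · simpa using (((hconv v).comp ht_top).abs.add ((hconv v).comp htu_top).abs)
  obtain ⟨n, hn⟩ := ((ENNReal.Tendsto.const_mul (hf _ (ENNReal.ofReal_pos.2 (half_pos hδ)))
    (Or.inr ENNReal.ofNat_ne_top)).eventually_lt_const (v := 2 * 0) (u := 1) (by simp)).exists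
  rw [Measure.restrict_apply' measurableSet_Icc] at hn
  have hlen : (1 : ENNReal) ≤ ENNReal.ofReal (2 - 0 - u n) := by
    rw [← ENNReal.ofReal_one]
    exact ENNReal.ofReal_le_ofReal (by linarith [(hu n).2])
  obtain ⟨v, hv, hvu⟩ := exists_notMem_and_sub_notMem (hu n).1 (hn.trans_le hlen)
  simp only [mem_ofPred_eq, Pi.zero_apply, edist_dist, dist_zero_right, not_le,
    ENNReal.ofReal_lt_ofReal_iff (half_pos hδ), Real.norm_eq_abs, f] at hv hvu
  rw [abs_of_nonneg (by positivity)] at hv hvu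
  rw [add_assoc, add_sub_cancel] at hvu
  have hv' : |h (t n + v) - h (t n)| < δ / 2 := by
    linarith [abs_nonneg (h (t n + u n + v) - h (t n + u n))]
  have hvu' : |h (t n + v) - h (t n + u n)| < δ / 2 := by
    linarith [abs_nonneg (h (t n + (v - u n)) - h (t n))]
  have htri := abs_sub_le (h (t n + u n)) (h (t n + v)) (h (t n))
  rw [abs_sub_comm (h (t n + u n)) (h (t n + v))] at htri
  exact ⟨n, by linarith⟩

theorem eventually_forall_Icc_abs_sub_le (hm : Measurable h)
    (hconv : ∀ u, Tendsto (fun t => h (t + u) - h t) atTop (𝓝 0)) {δ : ℝ} (hδ : 0 < δ) :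
    ∀ᶠ t in atTop, ∀ u ∈ Icc (0 : ℝ) 1, |h (t + u) - h t| ≤ δ := by
  by_contra hcon
  simp only [not_eventually, frequently_atTop, not_forall, not_le, exists_prop] at hcon
  choose t ht u hu hbad using fun n : ℕ => hcon n
  obtain ⟨n, hn⟩ := exists_abs_add_sub_lt hm hconv
    (tendsto_atTop_mono ht tendsto_natCast_atTop_atTop) hu hδ
  exact (hbad n).not_gt hn

theorem abs_sub_le_mul_natCast_of_forall_Icc {T δ : ℝ}
    (hstep : ∀ t ≥ T, ∀ u ∈ Icc (0 : ℝ) 1, |h (t + u) - h t| ≤ δ) (n : ℕ) {s t : ℝ}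
    (hT : T ≤ t) (hts : t ≤ s) (hsn : s ≤ t + n) : |h s - h t| ≤ δ * n := by
  induction n generalizing s with
  | zero => simp [le_antisymm (by simpa using hsn) hts]
  | succ n ih =>
    set r := max t (s - 1)
    have hr : |h r - h t| ≤ δ * n := ih (le_max_left _ _) (max_le (by push_cast at hsn; linarith)
      (by push_cast at hsn; linarith))
    have hsr : |h (r + (s - r)) - h r| ≤ δ :=
      hstep r (hT.trans (le_max_left _ _)) (s - r)
        ⟨sub_nonneg.2 (max_le hts (by linarith)), by linarith [le_max_right t (s - 1)]⟩
    rw [add_sub_cancel] at hsr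
    calc |h s - h t| ≤ |h s - h r| + |h r - h t| := abs_sub_le _ _ _
      _ ≤ δ * (n + 1 : ℕ) := by push_cast; linarith

theorem abs_sub_le_of_forall_Icc {T δ : ℝ} (hδ : 0 ≤ δ)
    (hstep : ∀ t ≥ T, ∀ u ∈ Icc (0 : ℝ) 1, |h (t + u) - h t| ≤ δ) {s t : ℝ}
    (hs : T ≤ s) (ht : T ≤ t) : |h s - h t| ≤ δ * (|s - t| + 1) := by
  wlog hts : t ≤ s generalizing s t
  · rw [abs_sub_comm, abs_sub_comm s]
    exact this ht hs (le_of_not_ge hts)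
  calc |h s - h t| ≤ δ * ⌈s - t⌉₊ :=
        abs_sub_le_mul_natCast_of_forall_Icc hstep _ ht hts (by linarith [Nat.le_ceil (s - t)])
    _ ≤ δ * (|s - t| + 1) := by
        rw [abs_of_nonneg (sub_nonneg.2 hts)]
        exact mul_le_mul_of_nonneg_left (Nat.ceil_lt_add_one (sub_nonneg.2 hts)).le hδ

theorem exists_sub_le_log_add_mul_abs (hm : Measurable h)
    (hconv : ∀ u, Tendsto (fun t => h (t + u) - h t) atTop (𝓝 0)) {ε : ℝ} (hε : 0 < ε) :
    ∃ T, ∀ s ≥ T, ∀ t ≥ T, h s - h t ≤ log (1 + ε) + ε * |s - t| := by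
  set δ := min ε (log (1 + ε))
  have hδ : 0 < δ := lt_min hε (log_pos (by linarith))
  obtain ⟨T, hT⟩ := (eventually_forall_Icc_abs_sub_le hm hconv hδ).exists_forall_of_atTop
  refine ⟨T, fun s hs t ht => ?_⟩
  calc h s - h t ≤ |h s - h t| := le_abs_self _
    _ ≤ δ * (|s - t| + 1) := abs_sub_le_of_forall_Icc hδ.le hT hs ht
    _ ≤ ε * |s - t| + log (1 + ε) := by
        rw [mul_add_one]
        exact add_le_add (mul_le_mul_of_nonneg_right (min_le_left _ _) (abs_nonneg _))
          (min_le_right _ _)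
    _ = log (1 + ε) + ε * |s - t| := add_comm _ _

end AdditiveForm

theorem tendsto_log_comp_exp_add_sub {L : ℝ → ℝ} (hLpos : ∀ x > (0 : ℝ), 0 < L x)
    (hsv : ∀ l : ℝ, 0 < l → Tendsto (fun x => L (l * x) / L x) atTop (𝓝 1)) (u : ℝ) :
    Tendsto (fun t => log (L (exp (t + u))) - log (L (exp t))) atTop (𝓝 0) := by
  have hlog := ((continuousAt_log one_ne_zero).tendsto.comp
    ((hsv (exp u) (exp_pos u)).comp tendsto_exp_atTop))
  rw [log_one] at hlog
  refine hlog.congr fun t => ?_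
  simp only [Function.comp_apply, ← exp_add, add_comm u t]
  exact log_div (hLpos _ (exp_pos _)).ne' (hLpos _ (exp_pos _)).ne'

theorem rpow_max_div_div {x y ε : ℝ} (hx : 0 < x) (hy : 0 < y) (hε : 0 ≤ ε) :
    max (x / y) (y / x) ^ ε = exp (ε * |log x - log y|) := by
  rw [abs_eq_max_neg, mul_max_of_nonneg _ _ hε, rpow_max (by positivity) (by positivity) hε,
    rpow_def_of_pos (by positivity), rpow_def_of_pos (by positivity), log_div hx.ne' hy.ne',
    log_div hy.ne' hx.ne', neg_sub]
  simp only [mul_comm, exp_monotone.map_max]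

theorem stmt_7 (L : ℝ → ℝ) (hLm : Measurable L) (hLpos : ∀ x > (0:ℝ), 0 < L x)
    (hsv : ∀ l : ℝ, 0 < l → Filter.Tendsto (fun x => L (l * x) / L x) Filter.atTop (nhds 1)) :
    ∀ ε > (0:ℝ), ∃ x₀ > (0:ℝ), ∀ x ≥ x₀, ∀ y ≥ x₀,
      L x / L y ≤ (1 + ε) * (max (x / y) (y / x)) ^ ε := by
  intro ε hε
  obtain ⟨T, hT⟩ := exists_sub_le_log_add_mul_abs (h := fun t => log (L (exp t)))
    (by fun_prop) (tendsto_log_comp_exp_add_sub hLpos hsv) hε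
  refine ⟨exp T, exp_pos T, fun x hx y hy => ?_⟩
  have hx0 : 0 < x := (exp_pos T).trans_le hx
  have hy0 : 0 < y := (exp_pos T).trans_le hy
  have hbound := hT (log x) ((le_log_iff_exp_le hx0).2 hx) (log y) ((le_log_iff_exp_le hy0).2 hy)
  simp only [exp_log hx0, exp_log hy0] at hbound
  calc L x / L y = exp (log (L x) - log (L y)) := by
        rw [exp_sub, exp_log (hLpos x hx0), exp_log (hLpos y hy0)]
    _ ≤ exp (log (1 + ε) + ε * |log x - log y|) := exp_le_exp.2 hbound
    _ = (1 + ε) * max (x / y) (y / x) ^ ε := by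
        rw [exp_add, exp_log (by linarith), rpow_max_div_div hx0 hy0 hε.le]
end

section
/- Let F be a cumulative distribution function on ℝ whose right tail 1 - F(x) is regularly varying at infinity with index -α, where α ∈ (0,1). Then limsup over r→∞ and A→∞ of sup_{y ∈ [A/r, 1]} y(1 - F(ry))/(1 - F(r)) is at most 1; precisely, for every ε > 0 there exist A₀ and r₀ such that for all A ≥ A₀ and r ≥ r₀ with A/r ≤ 1, sup_{y ∈ [A/r,1]} y(1-F(ry))/(1-F(r)) ≤ 1 + ε. -/
/-!
With `θ = 1 + ε`, the ratio `(1 - F (θ x)) / (1 - F x)` tends to `θ ^ (-α) > θ⁻¹` because `α < 1`,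
so for large `x` multiplying the argument by `θ` shrinks the tail by at most a factor `θ`.
Climbing from `r y` to just above `r` in `k` such steps, where `θ ^ (k - 1) y ≤ 1 < θ ^ k y`,
and using monotonicity of `F` for the overshoot, gives
`y (1 - F (r y)) ≤ y θ ^ k (1 - F r) ≤ θ (1 - F r)`.
-/

open Filter

theorem le_pow_mul_comp_pow_mul {G : ℝ → ℝ} {c θ R : ℝ} (hc : 0 ≤ c) (hθ : 1 ≤ θ) (hR : 0 ≤ R)
    (h : ∀ x ≥ R, G x ≤ c * G (θ * x)) (k : ℕ) : ∀ x ≥ R, G x ≤ c ^ k * G (θ ^ k * x) := by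
  induction k with
  | zero => simp
  | succ k ih =>
    intro x hx
    have hθx : R ≤ θ * x := hx.trans (le_mul_of_one_le_left (hR.trans hx) hθ)
    calc G x ≤ c * G (θ * x) := h x hx
      _ ≤ c * (c ^ k * G (θ ^ k * (θ * x))) := mul_le_mul_of_nonneg_left (ih _ hθx) hc
      _ = c ^ (k + 1) * G (θ ^ (k + 1) * x) := by ring_nf

theorem inv_lt_rpow_neg {θ α : ℝ} (hθ : 1 < θ) (hα : α < 1) : θ⁻¹ < θ ^ (-α) := by
  simpa [Real.rpow_neg_one] using Real.rpow_lt_rpow_of_exponent_lt hθ (neg_lt_neg hα)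

theorem eventually_le_mul_apply_mul_of_tendsto_div {G : ℝ → ℝ} (hG : ∀ x, 0 < G x) {θ L : ℝ}
    (hθ : 0 < θ) (hL : θ⁻¹ < L) (h : Tendsto (fun x => G (θ * x) / G x) atTop (nhds L)) :
    ∀ᶠ x in atTop, G x ≤ θ * G (θ * x) := by
  filter_upwards [h.eventually_const_lt hL] with x hx
  rw [lt_div_iff₀ (hG x), inv_mul_eq_div, div_lt_iff₀ hθ] at hx
  linarith

theorem Antitone.mul_apply_mul_le_mul_apply {G : ℝ → ℝ} (hG : Antitone G) {θ R : ℝ}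
    (hθ : 1 < θ) (hR : 0 ≤ R) (h : ∀ x ≥ R, G x ≤ θ * G (θ * x)) {r y : ℝ} (hGr : 0 ≤ G r)
    (hy0 : 0 < y) (hy1 : y ≤ 1) (hry : R ≤ r * y) : y * G (r * y) ≤ θ * G r := by
  have hr : 0 ≤ r := nonneg_of_mul_nonneg_left (hR.trans hry) hy0
  obtain ⟨n, hn, hn1⟩ := exists_nat_pow_near (one_le_one_div hy0 hy1) hθ
  rw [le_div_iff₀ hy0] at hn
  rw [div_lt_iff₀ hy0] at hn1
  have hclimb := le_pow_mul_comp_pow_mul (by positivity) hθ.le hR h (n + 1) (r * y) hry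
  have hovershoot : G (θ ^ (n + 1) * (r * y)) ≤ G r :=
    hG <| calc r = 1 * r := (one_mul r).symm
      _ ≤ θ ^ (n + 1) * y * r := by gcongr
      _ = θ ^ (n + 1) * (r * y) := by ring
  calc y * G (r * y) ≤ y * (θ ^ (n + 1) * G r) :=
        mul_le_mul_of_nonneg_left
          (hclimb.trans (mul_le_mul_of_nonneg_left hovershoot (by positivity))) hy0.le
    _ = θ ^ n * y * θ * G r := by ring
    _ ≤ 1 * θ * G r := by gcongr
    _ = θ * G r := by ring

theorem stmt_8 (α : ℝ) (hα : α ∈ Set.Ioo (0:ℝ) 1) (F : ℝ → ℝ) (hFm : Monotone F)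
    (hF1 : ∀ x, F x < 1)
    (hrv : ∀ l : ℝ, 0 < l →
      Filter.Tendsto (fun x => (1 - F (l * x)) / (1 - F x)) Filter.atTop (nhds (l ^ (-α)))) :
    ∀ ε > (0:ℝ), ∃ A₀ > (0:ℝ), ∃ r₀ > (0:ℝ), ∀ A ≥ A₀, ∀ r ≥ r₀, A / r ≤ 1 →
      ∀ y ∈ Set.Icc (A / r) 1, y * (1 - F (r * y)) / (1 - F r) ≤ 1 + ε := by
  intro ε hε
  have hG : ∀ x, 0 < 1 - F x := fun x => sub_pos.2 (hF1 x)
  have hθ : 1 < 1 + ε := by linarith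
  obtain ⟨R, hR⟩ := eventually_atTop.1 <| eventually_le_mul_apply_mul_of_tendsto_div hG
    (by positivity) (inv_lt_rpow_neg hθ hα.2) (hrv (1 + ε) (by positivity))
  refine ⟨max R 1, lt_max_of_lt_right one_pos, 1, one_pos, fun A hA r hr _ y ⟨hAy, hy1⟩ => ?_⟩
  have hr0 : 0 < r := one_pos.trans_le hr
  have hy0 : 0 < y := (div_pos ((lt_max_of_lt_right one_pos).trans_le hA) hr0).trans_le hAy
  have hry : max R 1 ≤ r * y := hA.trans (by rwa [div_le_iff₀ hr0, mul_comm] at hAy)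
  have hanti : Antitone fun x => 1 - F x := fun _ _ h => sub_le_sub_left (hFm h) 1
  rw [div_le_iff₀ (hG r)]
  exact hanti.mul_apply_mul_le_mul_apply hθ (by positivity)
    (fun x hx => hR x (le_of_max_le_left hx)) (hG r).le hy0 hy1 hry
end

section
/- Let F be a cumulative distribution function whose right tail 1 - F(x) is regularly varying at infinity with index -α, α ∈ (0,1). Then for every y ∈ (0,1], limsup_{r→∞} (1 - F(r))^{-1} ∫_{(0,y]} x dF_r(x) ≤ y^{1-α}/(1-α), where F_r(x) = F(rx) is the rescaled distribution (so ∫_{(0,y]} x dF_r(x) = ∫_{(0,ry]} (u/r) dF(u)). -/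
/-!
Write `T = 1 - f`. Cut `(0, r y]` at the points `y αʲ r`. On the `j`-th piece the integrand is at
most `y αʲ r`, so after division by `r T(r)` the piece contributes at most
`y αʲ (T(y αʲ⁺¹ r) - T(y αʲ r)) / T(r)`, which tends to `y αʲ ((y αʲ⁺¹)^(-α) - (y αʲ)^(-α))`.
By weighted AM-GM, `α^(-α) ≤ 2 - α`, so each of these limits is at most
`((y αʲ)^(1-α) - (y αʲ⁺¹)^(1-α)) / (1-α)`, and the sum telescopes to at most `y^(1-α) / (1-α)`.
The last piece `(0, y αⁿ r]` is controlled by a Potter-type bound: eventually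
`T(α x) ≤ ρ T(x)` with `α ρ < 1`, and induction along the grid then gives
`∫_{(0,b]} u dF ≤ K b T(b)` for every `b ≥ 0`. So the last piece contributes at most
`K (y αⁿ)^(1-α)`, which tends to `0` as `n → ∞`.
-/

open MeasureTheory Real Set Filter Topology


namespace StieltjesFunction

variable (f : StieltjesFunction ℝ)

theorem integrableOn_id_Ioc (a b : ℝ) : IntegrableOn (fun u => u) (Ioc a b) f.measure :=
  continuous_id.integrableOn_Icc.mono_set Ioc_subset_Icc_self

theorem setIntegral_Ioc_id_le {a b : ℝ} (hab : a ≤ b) :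
    ∫ u in Ioc a b, u ∂f.measure ≤ b * (f b - f a) := by
  have hfin : f.measure (Ioc a b) ≠ ⊤ := by
    rw [f.measure_Ioc]
    exact ENNReal.ofReal_ne_top
  calc ∫ u in Ioc a b, u ∂f.measure ≤ ∫ _ in Ioc a b, b ∂f.measure :=
        setIntegral_mono_on (f.integrableOn_id_Ioc a b) (integrableOn_const hfin)
          measurableSet_Ioc fun u hu => hu.2
    _ = b * (f b - f a) := by
        rw [setIntegral_const, measureReal_def, f.measure_Ioc,
          ENNReal.toReal_ofReal (sub_nonneg.2 (f.mono hab)), smul_eq_mul, mul_comm]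

theorem setIntegral_Ioc_zero_id_le_add {a b : ℝ} (ha : 0 ≤ a) (hab : a ≤ b) :
    ∫ u in Ioc 0 b, u ∂f.measure ≤ ∫ u in Ioc 0 a, u ∂f.measure + b * (f b - f a) := by
  rw [← Ioc_union_Ioc_eq_Ioc ha hab, setIntegral_union (Ioc_disjoint_Ioc_of_le le_rfl)
    measurableSet_Ioc (f.integrableOn_id_Ioc 0 a) (f.integrableOn_id_Ioc a b)]
  exact (add_le_add_iff_left _).2 (f.setIntegral_Ioc_id_le hab)

theorem setIntegral_Ioc_zero_id_le_sum {a : ℕ → ℝ} (ha : Antitone a) (ha0 : ∀ j, 0 ≤ a j)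
    (n : ℕ) :
    ∫ u in Ioc 0 (a 0), u ∂f.measure ≤
      ∫ u in Ioc 0 (a n), u ∂f.measure + ∑ j ∈ Finset.range n, a j * (f (a j) - f (a (j + 1))) := by
  induction n with
  | zero => simp
  | succ n ih =>
    have hstep := f.setIntegral_Ioc_zero_id_le_add (ha0 (n + 1)) (ha n.le_succ)
    rw [Finset.sum_range_succ]
    linarith

theorem setIntegral_Ioc_zero_id_le_of_tail_le (hf1 : ∀ x, f x < 1) {q ρ x₀ K : ℝ}
    (hq0 : 0 ≤ q) (hq1 : q ≤ 1) (hx₀ : ∀ x, x₀ ≤ x → 1 - f (q * x) ≤ ρ * (1 - f x))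
    (hK₀ : 1 - f 0 ≤ K * (1 - f x₀)) (hKρ : (K * q + 1) * ρ ≤ K) (m : ℕ) :
    ∀ b, 0 ≤ b → b * q ^ m ≤ x₀ → ∫ u in Ioc 0 b, u ∂f.measure ≤ K * (b * (1 - f b)) := by
  have hT : ∀ x, 0 < 1 - f x := fun x => sub_pos.2 (hf1 x)
  have hK : 0 ≤ K := by nlinarith [hT 0, hT x₀]
  have base : ∀ b, 0 ≤ b → b ≤ x₀ → ∫ u in Ioc 0 b, u ∂f.measure ≤ K * (b * (1 - f b)) := by
    intro b hb hbx
    calc ∫ u in Ioc 0 b, u ∂f.measure ≤ b * (f b - f 0) := f.setIntegral_Ioc_id_le hb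
      _ ≤ b * (K * (1 - f b)) := by
          refine mul_le_mul_of_nonneg_left ?_ hb
          nlinarith [hf1 b, mul_nonneg hK (sub_nonneg.2 (f.mono hbx))]
      _ = K * (b * (1 - f b)) := by ring
  induction m with
  | zero => exact fun b hb hbm => base b hb (by simpa using hbm)
  | succ m ih =>
    intro b hb hbm
    rcases le_or_gt b x₀ with hbx | hxb
    · exact base b hb hbx
    have hqb := ih (q * b) (mul_nonneg hq0 hb)
      (by rw [mul_comm q b, mul_assoc, ← pow_succ']; exact hbm)
    have hsplit := f.setIntegral_Ioc_zero_id_le_add (mul_nonneg hq0 hb)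
      (mul_le_of_le_one_left hb hq1)
    calc ∫ u in Ioc 0 b, u ∂f.measure
        ≤ K * (q * b * (1 - f (q * b))) + b * (f b - f (q * b)) := by linarith
      _ ≤ (K * q + 1) * b * (1 - f (q * b)) := by nlinarith [mul_nonneg hb (hT b).le]
      _ ≤ (K * q + 1) * b * (ρ * (1 - f b)) :=
          mul_le_mul_of_nonneg_left (hx₀ b hxb.le) (by positivity)
      _ = ((K * q + 1) * ρ) * (b * (1 - f b)) := by ring
      _ ≤ K * (b * (1 - f b)) := mul_le_mul_of_nonneg_right hKρ (mul_nonneg hb (hT b).le)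

theorem exists_setIntegral_Ioc_zero_id_le_mul_tail (hf1 : ∀ x, f x < 1) {q L : ℝ}
    (hq0 : 0 < q) (hq1 : q < 1) (hqL : q * L < 1)
    (hL : Tendsto (fun x => (1 - f (q * x)) / (1 - f x)) atTop (𝓝 L)) :
    ∃ K, ∀ b, 0 ≤ b → ∫ u in Ioc 0 b, u ∂f.measure ≤ K * (b * (1 - f b)) := by
  have hT : ∀ x, 0 < 1 - f x := fun x => sub_pos.2 (hf1 x)
  obtain ⟨ρ, hLρ, hρq⟩ := exists_between ((lt_div_iff₀' hq0).2 (by simpa using hqL))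
  have hqρ : q * ρ < 1 := (lt_div_iff₀' hq0).1 hρq
  obtain ⟨x₀, hx₀⟩ := eventually_atTop.1
    ((hL.eventually (eventually_lt_nhds hLρ)).and (eventually_gt_atTop 0))
  have hpotter : ∀ x, x₀ ≤ x → 1 - f (q * x) ≤ ρ * (1 - f x) := fun x hx =>
    ((div_lt_iff₀ (hT x)).1 (hx₀ x hx).1).le
  set K := max ((1 - f 0) / (1 - f x₀)) (ρ / (1 - q * ρ))
  have hK₀ : 1 - f 0 ≤ K * (1 - f x₀) := (div_le_iff₀ (hT x₀)).1 (le_max_left _ _)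
  have hKρ : (K * q + 1) * ρ ≤ K := by
    have hρK : ρ / (1 - q * ρ) ≤ K := le_max_right _ _
    linarith [(div_le_iff₀ (sub_pos.2 hqρ)).1 hρK]
  refine ⟨K, fun b hb => ?_⟩
  have hlim : Tendsto (fun m : ℕ => b * q ^ m) atTop (𝓝 0) := by
    simpa using (tendsto_pow_atTop_nhds_zero_of_lt_one hq0.le hq1).const_mul b
  obtain ⟨m, hm⟩ := (hlim.eventually (eventually_lt_nhds (hx₀ x₀ le_rfl).2)).exists
  exact f.setIntegral_Ioc_zero_id_le_of_tail_le hf1 hq0.le hq1.le hpotter hK₀ hKρ m b hb hm.le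

theorem scaled_setIntegral_le_of_le_mul_tail (hf1 : ∀ x, f x < 1) {K y q r : ℝ}
    (hK : ∀ b, 0 ≤ b → ∫ u in Ioc 0 b, u ∂f.measure ≤ K * (b * (1 - f b)))
    (hy : 0 ≤ y) (hq0 : 0 ≤ q) (hq1 : q ≤ 1) (hr : 0 < r) (n : ℕ) :
    (1 - f r)⁻¹ * ∫ u in Ioc 0 (r * y), u / r ∂f.measure ≤
      K * (y * q ^ n) * ((1 - f (y * q ^ n * r)) / (1 - f r)) +
        ∑ j ∈ Finset.range n, y * q ^ j *
          ((1 - f (y * q ^ (j + 1) * r)) / (1 - f r) - (1 - f (y * q ^ j * r)) / (1 - f r)) := by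
  have hTr : 0 < 1 - f r := sub_pos.2 (hf1 r)
  set a : ℕ → ℝ := fun j => y * q ^ j * r
  have ha : Antitone a := fun i j hij =>
    mul_le_mul_of_nonneg_right (mul_le_mul_of_nonneg_left (pow_le_pow_of_le_one hq0 hq1 hij) hy)
      hr.le
  have hsum := f.setIntegral_Ioc_zero_id_le_sum ha (fun j => by positivity) n
  have hrem := hK (a n) (by positivity)
  rw [show a 0 = r * y by simp [a, mul_comm]] at hsum
  calc (1 - f r)⁻¹ * ∫ u in Ioc 0 (r * y), u / r ∂f.measure
      = (∫ u in Ioc 0 (r * y), u ∂f.measure) / (r * (1 - f r)) := by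
        rw [integral_div]
        field_simp
    _ ≤ (K * (a n * (1 - f (a n))) + ∑ j ∈ Finset.range n, a j * (f (a j) - f (a (j + 1)))) /
          (r * (1 - f r)) := by
        gcongr
        linarith
    _ = _ := by
        rw [add_div, Finset.sum_div]
        congr 1
        · simp only [a]
          field_simp
        · refine Finset.sum_congr rfl fun j _ => ?_
          simp only [a]
          field_simp
          ring

theorem limsup_scaled_setIntegral_le (hf1 : ∀ x, f x < 1) {α K y q : ℝ}
    (hrv : ∀ l : ℝ, 0 < l →
      Tendsto (fun x => (1 - f (l * x)) / (1 - f x)) atTop (𝓝 (l ^ (-α))))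
    (hK : ∀ b, 0 ≤ b → ∫ u in Ioc 0 b, u ∂f.measure ≤ K * (b * (1 - f b)))
    (hy : 0 < y) (hq0 : 0 < q) (hq1 : q ≤ 1) (n : ℕ) :
    limsup (fun r => (1 - f r)⁻¹ * ∫ u in Ioc 0 (r * y), u / r ∂f.measure) atTop ≤
      K * (y * q ^ n) ^ (1 - α) +
        ∑ j ∈ Finset.range n, y * q ^ j * ((y * q ^ (j + 1)) ^ (-α) - (y * q ^ j) ^ (-α)) := by
  rw [sub_eq_add_neg, Real.rpow_add (by positivity), Real.rpow_one, ← mul_assoc]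
  have hG := ((hrv (y * q ^ n) (by positivity)).const_mul (K * (y * q ^ n))).add
    (tendsto_finsetSum (Finset.range n) fun j _ =>
      ((hrv (y * q ^ (j + 1)) (by positivity)).sub (hrv (y * q ^ j) (by positivity))).const_mul
        (y * q ^ j))
  refine (limsup_le_limsup ?_ ?_ hG.isBoundedUnder_le).trans hG.limsup_eq.le
  · filter_upwards [eventually_gt_atTop 0] with r hr
    exact f.scaled_setIntegral_le_of_le_mul_tail hf1 hK hy.le hq0.le hq1 hr n
  · refine isCoboundedUnder_le_of_eventually_le atTop (x := 0) ?_
    filter_upwards [eventually_gt_atTop 0] with r hr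
    refine mul_nonneg (inv_nonneg.2 (sub_pos.2 (hf1 r)).le) ?_
    exact setIntegral_nonneg measurableSet_Ioc fun u hu => div_nonneg hu.1.le hr.le

end StieltjesFunction

theorem Real.rpow_neg_self_le_two_sub {α : ℝ} (h0 : 0 < α) (h1 : α ≤ 1) : α ^ (-α) ≤ 2 - α := by
  have h := Real.geom_mean_le_arith_mean2_weighted h0.le (sub_nonneg.2 h1) (inv_nonneg.2 h0.le)
    zero_le_one (add_sub_cancel α 1)
  rwa [Real.one_rpow, mul_one, Real.inv_rpow h0.le, ← Real.rpow_neg h0.le, mul_inv_cancel₀ h0.ne',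
    mul_one, ← add_sub_assoc, one_add_one_eq_two] at h

theorem mul_rpow_neg_sub_le {α a : ℝ} (hα0 : 0 < α) (hα1 : α < 1) (ha : 0 < a) :
    a * ((α * a) ^ (-α) - a ^ (-α)) ≤ (a ^ (1 - α) - (α * a) ^ (1 - α)) / (1 - α) := by
  have hself : ∀ x : ℝ, 0 < x → x ^ (1 - α) = x * x ^ (-α) := fun x hx => by
    rw [sub_eq_add_neg, Real.rpow_add hx, Real.rpow_one]
  -- after factoring out `a ^ (1 - α)` this is `α ^ (-α) ≤ 2 - α`
  have hamgm := Real.rpow_neg_self_le_two_sub hα0 hα1.le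
  rw [Real.mul_rpow hα0.le ha.le, Real.mul_rpow hα0.le ha.le, hself α hα0, hself a ha,
    le_div_iff₀ (sub_pos.2 hα1)]
  nlinarith [mul_pos ha (Real.rpow_pos_of_pos ha (-α))]

theorem sum_mul_rpow_neg_sub_le {α y : ℝ} (hα0 : 0 < α) (hα1 : α < 1) (hy : 0 < y) (n : ℕ) :
    ∑ j ∈ Finset.range n, y * α ^ j * ((y * α ^ (j + 1)) ^ (-α) - (y * α ^ j) ^ (-α)) ≤
      (y ^ (1 - α) - (y * α ^ n) ^ (1 - α)) / (1 - α) := by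
  calc ∑ j ∈ Finset.range n, y * α ^ j * ((y * α ^ (j + 1)) ^ (-α) - (y * α ^ j) ^ (-α))
      ≤ ∑ j ∈ Finset.range n, ((y * α ^ j) ^ (1 - α) - (y * α ^ (j + 1)) ^ (1 - α)) / (1 - α) := by
        refine Finset.sum_le_sum fun j _ => ?_
        rw [show y * α ^ (j + 1) = α * (y * α ^ j) by ring]
        exact mul_rpow_neg_sub_le hα0 hα1 (by positivity)
    _ = (y ^ (1 - α) - (y * α ^ n) ^ (1 - α)) / (1 - α) := by
        rw [← Finset.sum_div, Finset.sum_range_sub' (fun j => (y * α ^ j) ^ (1 - α)), pow_zero,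
          mul_one]

theorem stmt_9 (α : ℝ) (hα : α ∈ Set.Ioo (0:ℝ) 1) (f : StieltjesFunction ℝ)
    (hf1 : ∀ x, f x < 1)
    (hrv : ∀ l : ℝ, 0 < l →
      Filter.Tendsto (fun x => (1 - f (l * x)) / (1 - f x)) Filter.atTop (nhds (l ^ (-α)))) :
    ∀ y ∈ Set.Ioc (0:ℝ) 1,
      Filter.limsup
          (fun r => (1 - f r)⁻¹ * ∫ u in Set.Ioc (0:ℝ) (r * y), u / r ∂f.measure)
          Filter.atTop
        ≤ y ^ (1 - α) / (1 - α) := by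
  obtain ⟨hα0, hα1⟩ := hα
  have hαL : α * α ^ (-α) < 1 := by
    calc α * α ^ (-α) < α * α ^ (-1 : ℝ) :=
          mul_lt_mul_of_pos_left (Real.rpow_lt_rpow_of_exponent_gt hα0 hα1 (by linarith)) hα0
      _ = 1 := by rw [Real.rpow_neg_one, mul_inv_cancel₀ hα0.ne']
  obtain ⟨K, hK⟩ := f.exists_setIntegral_Ioc_zero_id_le_mul_tail hf1 hα0 hα1 hαL (hrv α hα0)
  rintro y ⟨hy0, -⟩
  have hbound : ∀ n : ℕ,
      limsup (fun r => (1 - f r)⁻¹ * ∫ u in Ioc 0 (r * y), u / r ∂f.measure) atTop ≤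
        y ^ (1 - α) / (1 - α) + K * (y * α ^ n) ^ (1 - α) := fun n => by
    have hsum := sum_mul_rpow_neg_sub_le hα0 hα1 hy0 n
    have hrem : 0 ≤ (y * α ^ n) ^ (1 - α) / (1 - α) :=
      div_nonneg (Real.rpow_nonneg (by positivity) _) (sub_pos.2 hα1).le
    rw [sub_div] at hsum
    linarith [f.limsup_scaled_setIntegral_le hf1 hrv hK hy0 hα0 hα1.le n]
  have hgrid : Tendsto (fun n : ℕ => y * α ^ n) atTop (𝓝 0) := by
    simpa using (tendsto_pow_atTop_nhds_zero_of_lt_one hα0.le hα1).const_mul y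
  have hlim := (((Real.continuousAt_rpow_const 0 (1 - α) (Or.inr (sub_pos.2 hα1).le)).tendsto.comp
    hgrid).const_mul K).const_add (y ^ (1 - α) / (1 - α))
  rw [Real.zero_rpow (sub_pos.2 hα1).ne', mul_zero, add_zero] at hlim
  exact ge_of_tendsto' hlim hbound
end

section
/- For α ∈ (0,1) and ε, z with 0 < ε and 0 ≤ z < 1, define R₁(z) = (1-z)^{1-α} Φ_α(ε/(1-z))^{-1} [ (1 + ε/(1-z))^{1-α} - 1 ]. Then there exist constants C̃₁ = inf_{0<y≤1} y^{α-1}Φ_α(y) > 0 and C̃₂ = sup_{0<y≤1}((1+y)^{1-α}-1)/y < ∞ such that: if ε ≥ 1-z then R₁(z) ≤ 2^{1-α} Φ_α(1)^{-1} ε^{1-α}, and if 0 < ε < 1-z then R₁(z) ≤ (C̃₂/C̃₁) ε^{min(α, 1-α)}. In particular sup_{z∈[0,1)} R₁(z) → 0 as ε → 0. -/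
/-!
Write `w = 1 - z` and `t = ε / w`, so that `R₁ = w^(1-α) ((1+t)^(1-α) - 1) / Φ t`.
For `t ≥ 1`, monotonicity gives `Φ t ≥ Φ 1`, and the numerator is at most
`(w + ε)^(1-α) ≤ (2ε)^(1-α)`. For `t ≤ 1` the integrand is at least `u^(-α)/2`, so
`Φ t ≥ C₁ t^(1-α)` with `C₁ = sin(πα) / (2π(1-α))`, while Bernoulli's inequality gives
`(1+t)^(1-α) - 1 ≤ t` (so `C₂ = 1`); hence `R₁ ≤ w^(1-α) t^α / C₁ ≤ (w t)^m / C₁ = ε^m / C₁`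
for `m = min α (1-α)`, because `w, t ≤ 1`.
-/

open MeasureTheory Real Set Filter Topology

lemma integrableOn_rpow_neg_mul_inv_one_add {α t : ℝ} (hα : α < 1) (ht : 0 < t) :
    IntegrableOn (fun u : ℝ => u ^ (-α) * (1 + u)⁻¹) (Ioo 0 t) := by
  refine ((intervalIntegral.integrableOn_Ioo_rpow_iff (s := -α) ht).2 (by linarith)).mono' ?_ ?_
  · exact ((measurable_id.pow_const _).mul
      (measurable_const.add measurable_id).inv).aestronglyMeasurable
  · filter_upwards [ae_restrict_mem measurableSet_Ioo] with u ⟨hu0, _⟩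
    rw [norm_of_nonneg (by positivity)]
    exact mul_le_of_le_one_right (by positivity)
      (inv_le_one_of_one_le₀ (by linarith : (1 : ℝ) ≤ 1 + u))

lemma setIntegral_rpow_neg_mul_inv_one_add_mono {α a b : ℝ} (hα : α < 1) (ha : 0 < a)
    (hab : a ≤ b) :
    ∫ u in Ioo 0 a, u ^ (-α) * (1 + u)⁻¹ ≤ ∫ u in Ioo 0 b, u ^ (-α) * (1 + u)⁻¹ := by
  refine setIntegral_mono_set (integrableOn_rpow_neg_mul_inv_one_add hα (ha.trans_le hab)) ?_
    (Ioo_subset_Ioo_right hab).eventuallyLE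
  filter_upwards [ae_restrict_mem measurableSet_Ioo] with u ⟨hu0, _⟩
  positivity

lemma rpow_div_le_setIntegral_rpow_neg_mul_inv_one_add {α y : ℝ} (hα : α < 1) (hy0 : 0 < y)
    (hy1 : y ≤ 1) :
    y ^ (1 - α) / (2 * (1 - α)) ≤ ∫ u in Ioo 0 y, u ^ (-α) * (1 + u)⁻¹ := by
  have hpow_int : IntegrableOn (fun u : ℝ => u ^ (-α)) (Ioo 0 y) :=
    (intervalIntegral.integrableOn_Ioo_rpow_iff hy0).2 (by linarith)
  have hpow : ∫ u in Ioo 0 y, u ^ (-α) = y ^ (1 - α) / (1 - α) := by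
    rw [← integral_Ioc_eq_integral_Ioo, ← intervalIntegral.integral_of_le hy0.le,
      integral_rpow (Or.inl (by linarith)), zero_rpow (by linarith)]
    ring_nf
  calc y ^ (1 - α) / (2 * (1 - α)) = ∫ u in Ioo 0 y, u ^ (-α) * 2⁻¹ := by
        rw [integral_mul_const, hpow]; field_simp
    _ ≤ ∫ u in Ioo 0 y, u ^ (-α) * (1 + u)⁻¹ := by
        refine setIntegral_mono_on (hpow_int.mul_const _)
          (integrableOn_rpow_neg_mul_inv_one_add hα hy0) measurableSet_Ioo fun u ⟨hu0, hu1⟩ => ?_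
        gcongr
        linarith

lemma one_add_rpow_sub_one_le {p y : ℝ} (hp0 : 0 ≤ p) (hp1 : p ≤ 1) (hy : 0 ≤ y) :
    (1 + y) ^ p - 1 ≤ y := by
  nlinarith [rpow_one_add_le_one_add_mul_self (s := y) (by linarith) hp0 hp1]

lemma rpow_mul_rpow_le_mul_rpow {w t a b m : ℝ} (hw0 : 0 ≤ w) (hw1 : w ≤ 1) (ht0 : 0 ≤ t)
    (ht1 : t ≤ 1) (hm : 0 ≤ m) (hma : m ≤ a) (hmb : m ≤ b) :
    w ^ a * t ^ b ≤ (w * t) ^ m := by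
  rw [mul_rpow hw0 ht0]
  exact mul_le_mul (rpow_le_rpow_of_exponent_ge' hw0 hw1 hm hma)
    (rpow_le_rpow_of_exponent_ge' ht0 ht1 hm hmb) (by positivity) (by positivity)

lemma rpow_div_mul_one_add_rpow_sub_one_le_of_le {α w ε : ℝ} {Φ : ℝ → ℝ} (hα1 : α ≤ 1)
    (hΦ1 : 0 < Φ 1) (hΦ : ∀ t, 1 ≤ t → Φ 1 ≤ Φ t) (hw : 0 < w) (hwε : w ≤ ε) :
    w ^ (1 - α) / Φ (ε / w) * ((1 + ε / w) ^ (1 - α) - 1) ≤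
      2 ^ (1 - α) / Φ 1 * ε ^ (1 - α) := by
  have hε : 0 < ε := hw.trans_le hwε
  have ht : 1 ≤ ε / w := (one_le_div hw).2 hwε
  have hnum : w ^ (1 - α) * ((1 + ε / w) ^ (1 - α) - 1) ≤ 2 ^ (1 - α) * ε ^ (1 - α) :=
    calc w ^ (1 - α) * ((1 + ε / w) ^ (1 - α) - 1)
        ≤ w ^ (1 - α) * (1 + ε / w) ^ (1 - α) := by gcongr; linarith
      _ = (w + ε) ^ (1 - α) := by
        rw [← mul_rpow hw.le (by positivity), mul_add, mul_div_cancel₀ _ hw.ne', mul_one]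
      _ ≤ (2 * ε) ^ (1 - α) := rpow_le_rpow (by linarith) (by linarith) (by linarith)
      _ = 2 ^ (1 - α) * ε ^ (1 - α) := mul_rpow zero_le_two (by linarith)
  calc w ^ (1 - α) / Φ (ε / w) * ((1 + ε / w) ^ (1 - α) - 1)
      = w ^ (1 - α) * ((1 + ε / w) ^ (1 - α) - 1) / Φ (ε / w) := by ring
    _ ≤ 2 ^ (1 - α) * ε ^ (1 - α) / Φ 1 := by
      gcongr
      exact hΦ _ ht
    _ = 2 ^ (1 - α) / Φ 1 * ε ^ (1 - α) := by ring

lemma rpow_div_mul_one_add_rpow_sub_one_le_of_lt {α w ε C : ℝ} {Φ : ℝ → ℝ} (hα0 : 0 ≤ α)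
    (hα1 : α ≤ 1) (hC : 0 < C) (hΦ : ∀ y ∈ Ioc (0 : ℝ) 1, C * y ^ (1 - α) ≤ Φ y)
    (hε : 0 < ε) (hεw : ε < w) (hw1 : w ≤ 1) :
    w ^ (1 - α) / Φ (ε / w) * ((1 + ε / w) ^ (1 - α) - 1) ≤ 1 / C * ε ^ min α (1 - α) := by
  have hw : 0 < w := hε.trans hεw
  set t := ε / w
  have ht0 : 0 < t := div_pos hε hw
  have ht1 : t < 1 := (div_lt_one hw).2 hεw
  have hε_eq : w * t = ε := mul_div_cancel₀ ε hw.ne'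
  calc w ^ (1 - α) / Φ t * ((1 + t) ^ (1 - α) - 1)
      ≤ w ^ (1 - α) / (C * t ^ (1 - α)) * t := by
        gcongr
        · exact sub_nonneg.2 (one_le_rpow (by linarith) (by linarith))
        · exact hΦ t ⟨ht0, ht1.le⟩
        · exact one_add_rpow_sub_one_le (by linarith) (by linarith) ht0.le
    _ = 1 / C * (w ^ (1 - α) * t ^ α) := by
        have : t ^ α = t / t ^ (1 - α) := by
          rw [eq_div_iff (by positivity), ← rpow_add ht0]; simp
        rw [this]
        field_simp
    _ ≤ 1 / C * ε ^ min α (1 - α) := by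
        rw [← hε_eq]
        gcongr
        exact rpow_mul_rpow_le_mul_rpow hw.le hw1 ht0.le ht1.le (le_min hα0 (by linarith))
          (min_le_right _ _) (min_le_left _ _)

lemma tendsto_const_mul_rpow_nhdsGT_zero (A : ℝ) {p : ℝ} (hp : 0 < p) :
    Tendsto (fun ε : ℝ => A * ε ^ p) (𝓝[>] 0) (𝓝 0) := by
  have h := ((continuousAt_rpow_const 0 p (Or.inr hp.le)).const_mul A).tendsto
  rw [zero_rpow hp.ne', mul_zero] at h
  exact h.mono_left nhdsWithin_le_nhds

lemma exists_pos_forall_mul_rpow_le (A B : ℝ) {p q δ : ℝ} (hp : 0 < p) (hq : 0 < q) (hδ : 0 < δ) :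
    ∃ ε₀ > 0, ∀ ε, 0 < ε → ε < ε₀ → A * ε ^ p ≤ δ ∧ B * ε ^ q ≤ δ := by
  obtain ⟨ε₀, hε₀, h⟩ := (nhdsGT_basis (0 : ℝ)).eventually_iff.1
    (((tendsto_const_mul_rpow_nhdsGT_zero A hp).eventually_le_const hδ).and
      ((tendsto_const_mul_rpow_nhdsGT_zero B hq).eventually_le_const hδ))
  exact ⟨ε₀, hε₀, fun ε hε hεε₀ => h ⟨hε, hεε₀⟩⟩

theorem stmt_14 (α : ℝ) (hα : α ∈ Set.Ioo (0:ℝ) 1)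
    (Φ : ℝ → ℝ)
    (hΦ : ∀ y > (0:ℝ), Φ y = (Real.sin (π * α) / π) * ∫ u in Set.Ioo (0:ℝ) y, u ^ (-α) * (1 + u)⁻¹)
    (R₁ : ℝ → ℝ → ℝ)
    (hR₁ : ∀ ε z, R₁ ε z
      = (1 - z) ^ (1 - α) / Φ (ε / (1 - z)) * ((1 + ε / (1 - z)) ^ (1 - α) - 1)) :
    ∃ C₁ > (0:ℝ), ∃ C₂ : ℝ,
      (∀ y ∈ Set.Ioc (0:ℝ) 1, C₁ ≤ y ^ (α - 1) * Φ y) ∧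
      (∀ y ∈ Set.Ioc (0:ℝ) 1, ((1 + y) ^ (1 - α) - 1) / y ≤ C₂) ∧
      (∀ ε > (0:ℝ), ∀ z ∈ Set.Ico (0:ℝ) 1,
        (1 - z ≤ ε → R₁ ε z ≤ 2 ^ (1 - α) / Φ 1 * ε ^ (1 - α)) ∧
        (ε < 1 - z → R₁ ε z ≤ C₂ / C₁ * ε ^ (min α (1 - α)))) ∧
      (∀ δ > (0:ℝ), ∃ ε₀ > (0:ℝ), ∀ ε, 0 < ε → ε < ε₀ → ∀ z ∈ Set.Ico (0:ℝ) 1, R₁ ε z ≤ δ) := by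
  obtain ⟨hα0, hα1⟩ := hα
  have hc : 0 < sin (π * α) / π :=
    div_pos (sin_pos_of_pos_of_lt_pi (by positivity) (by nlinarith [pi_pos])) pi_pos
  set C₁ := sin (π * α) / π / (2 * (1 - α))
  have hC₁ : 0 < C₁ := div_pos hc (by linarith)
  have hΦ_lower : ∀ y ∈ Ioc (0 : ℝ) 1, C₁ * y ^ (1 - α) ≤ Φ y := fun y ⟨hy0, hy1⟩ => by
    rw [hΦ y hy0, div_mul_eq_mul_div, mul_div_assoc]
    gcongr
    exact rpow_div_le_setIntegral_rpow_neg_mul_inv_one_add hα1 hy0 hy1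
  have hΦ_mono : ∀ t, 1 ≤ t → Φ 1 ≤ Φ t := fun t ht => by
    rw [hΦ 1 one_pos, hΦ t (by linarith)]
    exact mul_le_mul_of_nonneg_left (setIntegral_rpow_neg_mul_inv_one_add_mono hα1 one_pos ht) hc.le
  have hΦ1 : 0 < Φ 1 := lt_of_lt_of_le (by positivity) (hΦ_lower 1 ⟨one_pos, le_rfl⟩)
  have hR₁_bound : ∀ ε > (0 : ℝ), ∀ z ∈ Ico (0 : ℝ) 1,
      (1 - z ≤ ε → R₁ ε z ≤ 2 ^ (1 - α) / Φ 1 * ε ^ (1 - α)) ∧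
      (ε < 1 - z → R₁ ε z ≤ 1 / C₁ * ε ^ min α (1 - α)) := fun ε hε z ⟨hz0, hz1⟩ => by
    rw [hR₁]
    exact ⟨rpow_div_mul_one_add_rpow_sub_one_le_of_le hα1.le hΦ1 hΦ_mono (by linarith),
      fun h => rpow_div_mul_one_add_rpow_sub_one_le_of_lt hα0.le hα1.le hC₁ hΦ_lower hε h
        (by linarith)⟩
  refine ⟨C₁, hC₁, 1, fun y hy => ?_, fun y ⟨hy0, _⟩ => ?_, hR₁_bound, fun δ hδ => ?_⟩
  · calc C₁ = y ^ (α - 1) * (C₁ * y ^ (1 - α)) := by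
          rw [mul_left_comm, ← rpow_add hy.1]; simp
      _ ≤ y ^ (α - 1) * Φ y := mul_le_mul_of_nonneg_left (hΦ_lower y hy) (rpow_nonneg hy.1.le _)
  · exact (div_le_one hy0).2 (one_add_rpow_sub_one_le (by linarith) (by linarith) hy0.le)
  · obtain ⟨ε₀, hε₀, h⟩ := exists_pos_forall_mul_rpow_le (2 ^ (1 - α) / Φ 1) (1 / C₁)
      (by linarith : 0 < 1 - α) (lt_min hα0 (by linarith) : 0 < min α (1 - α)) hδ
    refine ⟨ε₀, hε₀, fun ε hε hεε₀ z hz => ?_⟩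
    obtain ⟨h_large, h_lt⟩ := h ε hε hεε₀
    rcases le_or_gt (1 - z) ε with hzε | hzε
    · exact ((hR₁_bound ε hε z hz).1 hzε).trans h_large
    · exact ((hR₁_bound ε hε z hz).2 hzε).trans h_lt
end

section
/- Let F be a distribution function on ℝ satisfying: 1-F is regularly varying at infinity with index -α, α ∈ (0,1), and there exist C > 0, ρ ∈ (0,1) such that (1 - F(yx))/(1 - F(y)) ≤ 1 + C(1-x) for all sufficiently large y and all x ∈ (ρ,1). Then for every a > 0, lim_{x→∞} x·(F(x+a) - F(x)) = 0, and moreover lim_{x→∞} x·(F(x + a·ln x) - F(x)) = 0. -/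
/-!
Write `ḡ = 1 - F`. Regular variation at the point `2` gives `ḡ (2x) ≤ 2^{-β} ḡ x` for large `x`
and any `β < α`, so iterating along dyadic scales `ḡ = O(x^{-β})`; in particular both `ḡ` and
`log · ḡ` tend to `0`. The uniform condition, applied at `y = x + b` with ratio `x / y → 1`, gives
`ḡ x ≤ (1 + C b / y) ḡ y`, hence `x (F (x + b) - F x) ≤ C b ḡ x`, which tends to `0` both for
`b = a` and for `b = a log x`.
-/

open Real Set Filter Asymptotics Topology

section DyadicDecay

variable {g : ℝ → ℝ} {β : ℝ}

theorem Antitone.le_mul_rpow_neg_of_doubling (hg : Antitone g) (hβ : 0 ≤ β) {x₀ : ℝ}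
    (hx₀ : 0 < x₀) (hstep : ∀ x, x₀ ≤ x → g (2 * x) ≤ 2 ^ (-β) * g x) (hg₀ : 0 ≤ g x₀)
    {x : ℝ} (hx : x₀ ≤ x) :
    g x ≤ g x₀ * (2 * x₀) ^ β * x ^ (-β) := by
  have base : ∀ x, x₀ ≤ x → x ≤ 2 * x₀ → g x ≤ g x₀ * (2 * x₀) ^ β * x ^ (-β) := by
    intro x hx hx2
    have hx0 : 0 < x := hx₀.trans_le hx
    have hone : 1 ≤ (2 * x₀) ^ β * x ^ (-β) := by
      rw [rpow_neg hx0.le, ← div_eq_mul_inv, ← div_rpow (by positivity) hx0.le]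
      exact one_le_rpow ((one_le_div hx0).2 hx2) hβ
    calc g x ≤ g x₀ * 1 := by rw [mul_one]; exact hg hx
      _ ≤ g x₀ * ((2 * x₀) ^ β * x ^ (-β)) := mul_le_mul_of_nonneg_left hone hg₀
      _ = _ := by ring
  suffices ∀ n : ℕ, ∀ x, x₀ ≤ x → x ≤ 2 ^ n * x₀ → g x ≤ g x₀ * (2 * x₀) ^ β * x ^ (-β) by
    obtain ⟨n, hn⟩ := pow_unbounded_of_one_lt (x / x₀) one_lt_two
    exact this n x hx ((div_lt_iff₀ hx₀).1 hn).le
  intro n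
  induction n with
  | zero => exact fun x hx hx' => base x hx (by linarith)
  | succ n ih =>
    intro x hx hxn
    rcases le_or_gt x (2 * x₀) with hx2 | hx2
    · exact base x hx hx2
    have hhalf : x₀ ≤ x / 2 := by linarith
    have hhalf0 : 0 < x / 2 := hx₀.trans_le hhalf
    calc g x = g (2 * (x / 2)) := by ring_nf
      _ ≤ 2 ^ (-β) * g (x / 2) := hstep _ hhalf
      _ ≤ 2 ^ (-β) * (g x₀ * (2 * x₀) ^ β * (x / 2) ^ (-β)) :=
          mul_le_mul_of_nonneg_left (ih _ hhalf (by rw [pow_succ] at hxn; linarith))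
            (by positivity)
      _ = g x₀ * (2 * x₀) ^ β * x ^ (-β) := by
          rw [div_rpow (by linarith) zero_le_two, rpow_neg zero_le_two]
          field_simp

theorem Antitone.isBigO_rpow_neg_of_tendsto_div {α : ℝ} (hg : Antitone g) (hpos : ∀ x, 0 < g x)
    (h : Tendsto (fun x => g (2 * x) / g x) atTop (𝓝 (2 ^ (-α)))) (hβ : 0 ≤ β) (hβα : β < α) :
    g =O[atTop] fun x => x ^ (-β) := by
  have hlt : (2 : ℝ) ^ (-α) < 2 ^ (-β) := rpow_lt_rpow_of_exponent_lt one_lt_two (by linarith)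
  obtain ⟨x₁, hx₁⟩ := eventually_atTop.1 (h.eventually_lt_const hlt)
  set x₀ := max x₁ 1
  have hstep : ∀ x, x₀ ≤ x → g (2 * x) ≤ 2 ^ (-β) * g x := fun x hx =>
    ((div_lt_iff₀ (hpos x)).1 (hx₁ x ((le_max_left _ _).trans hx))).le
  have hx₀ : 0 < x₀ := zero_lt_one.trans_le (le_max_right _ _)
  refine IsBigO.of_bound (g x₀ * (2 * x₀) ^ β) ?_
  filter_upwards [eventually_ge_atTop x₀] with x hx
  have hx0 : 0 < x := hx₀.trans_le hx
  rw [norm_of_nonneg (hpos x).le, norm_of_nonneg (rpow_nonneg hx0.le _)]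
  exact hg.le_mul_rpow_neg_of_doubling hβ hx₀ hstep (hpos x₀).le hx

theorem tendsto_log_mul_of_isBigO_rpow_neg (hβ : 0 < β) (hg : g =O[atTop] fun x => x ^ (-β)) :
    Tendsto (fun x => log x * g x) atTop (𝓝 0) := by
  have hprod : (fun x => x ^ β * x ^ (-β)) =ᶠ[atTop] fun _ => (1 : ℝ) := by
    filter_upwards [eventually_gt_atTop 0] with x hx
    rw [← rpow_add hx, add_neg_cancel, rpow_zero]
  exact (isLittleO_one_iff ℝ).1
    (((isLittleO_log_rpow_atTop hβ).mul_isBigO hg).trans_eventuallyEq hprod)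

end DyadicDecay

section Increments

variable {F : ℝ → ℝ} {C ρ : ℝ}

theorem mul_sub_le_of_tail_ratio_le (hFm : Monotone F) (hF1 : ∀ x, F x < 1) (hC : 0 ≤ C)
    {x y : ℝ} (hx : 0 < x) (hxy : x ≤ y)
    (h : (1 - F (y * (x / y))) / (1 - F y) ≤ 1 + C * (1 - x / y)) :
    x * (F y - F x) ≤ C * (y - x) * (1 - F x) := by
  have hy : 0 < y := hx.trans_le hxy
  have hgy : 0 < 1 - F y := by linarith [hF1 y]
  rw [mul_div_cancel₀ x hy.ne', div_le_iff₀ hgy] at h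
  have hw : 0 ≤ C * (1 - x / y) := mul_nonneg hC (by rw [sub_nonneg, div_le_one hy]; exact hxy)
  have hinc : F y - F x ≤ C * (1 - x / y) * (1 - F x) := by
    linarith [mul_le_mul_of_nonneg_left (sub_le_sub_left (hFm hxy) 1) hw]
  have hxy' : x * (1 - x / y) ≤ y - x := by
    rw [show x * (1 - x / y) = x / y * (y - x) by field_simp]
    exact mul_le_of_le_one_left (by linarith) ((div_le_one hy).2 hxy)
  calc x * (F y - F x) ≤ x * (C * (1 - x / y) * (1 - F x)) :=
        mul_le_mul_of_nonneg_left hinc hx.le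
    _ = C * (x * (1 - x / y)) * (1 - F x) := by ring
    _ ≤ C * (y - x) * (1 - F x) := by
        gcongr
        linarith [hF1 x]

theorem tendsto_mul_sub_of_tail_ratio_le (hFm : Monotone F) (hF1 : ∀ x, F x < 1) (hC : 0 ≤ C)
    (hρ : ρ < 1)
    (hcond : ∀ᶠ y in atTop, ∀ x ∈ Ioo ρ 1, (1 - F (y * x)) / (1 - F y) ≤ 1 + C * (1 - x))
    (b : ℝ → ℝ) (hb : ∀ᶠ x in atTop, 0 < b x) (hbx : Tendsto (fun x => b x / x) atTop (𝓝 0))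
    (hbF : Tendsto (fun x => b x * (1 - F x)) atTop (𝓝 0)) :
    Tendsto (fun x => x * (F (x + b x) - F x)) atTop (𝓝 0) := by
  have hratio : Tendsto (fun x => x / (x + b x)) atTop (𝓝 1) := by
    have h := (tendsto_const_nhds (x := (1 : ℝ))).div (tendsto_const_nhds.add hbx)
      (by norm_num : (1 : ℝ) + 0 ≠ 0)
    rw [add_zero, div_one] at h
    refine h.congr' ?_
    filter_upwards [eventually_gt_atTop 0] with x hx
    rw [Pi.div_apply, one_add_div hx.ne', one_div_div]
  have hshift : Tendsto (fun x => x + b x) atTop atTop := by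
    refine tendsto_atTop_mono' atTop ?_ tendsto_id
    filter_upwards [hb] with x hx using le_add_of_nonneg_right hx.le
  refine squeeze_zero' ?_ ?_ ((hbF.const_mul C).trans (by rw [mul_zero]))
  · filter_upwards [hb, eventually_ge_atTop 0] with x hbx hx
    exact mul_nonneg hx (sub_nonneg.2 (hFm (le_add_of_nonneg_right hbx.le)))
  · filter_upwards [hratio.eventually (eventually_gt_nhds hρ), hshift.eventually hcond, hb,
      eventually_gt_atTop 0] with x hρx hcondx hbx hx
    have hxy : x < x + b x := lt_add_of_pos_right x hbx
    have h := hcondx _ ⟨hρx, (div_lt_one (hx.trans hxy)).2 hxy⟩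
    calc x * (F (x + b x) - F x) ≤ C * (x + b x - x) * (1 - F x) :=
          mul_sub_le_of_tail_ratio_le hFm hF1 hC hx hxy.le h
      _ = C * (b x * (1 - F x)) := by ring

end Increments

theorem stmt_15 (α : ℝ) (hα : α ∈ Set.Ioo (0:ℝ) 1) (F : ℝ → ℝ) (hFm : Monotone F)
    (hF1 : ∀ x, F x < 1)
    (hrv : ∀ l : ℝ, 0 < l →
      Filter.Tendsto (fun x => (1 - F (l * x)) / (1 - F x)) Filter.atTop (nhds (l ^ (-α))))
    (C ρ : ℝ) (hC : 0 < C) (hρ : ρ ∈ Set.Ioo (0:ℝ) 1)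
    (hcond : ∀ᶠ y in Filter.atTop, ∀ x ∈ Set.Ioo ρ 1, (1 - F (y * x)) / (1 - F y) ≤ 1 + C * (1 - x)) :
    ∀ a > (0:ℝ),
      Filter.Tendsto (fun x => x * (F (x + a) - F x)) Filter.atTop (nhds 0) ∧
      Filter.Tendsto (fun x => x * (F (x + a * Real.log x) - F x)) Filter.atTop (nhds 0) := by
  intro a ha
  have hβ : 0 < α / 2 := half_pos hα.1
  have htail : (fun x => 1 - F x) =O[atTop] fun x => x ^ (-(α / 2)) :=
    Antitone.isBigO_rpow_neg_of_tendsto_div (fun x y h => sub_le_sub_left (hFm h) 1)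
      (fun x => sub_pos.2 (hF1 x)) (hrv 2 two_pos) hβ.le (half_lt_self hα.1)
  have hincr := tendsto_mul_sub_of_tail_ratio_le hFm hF1 hC.le hρ.2 hcond
  constructor
  · refine hincr _ (.of_forall fun _ => ha) (tendsto_const_nhds.div_atTop tendsto_id) ?_
    simpa using (htail.trans_tendsto (tendsto_rpow_neg_atTop hβ)).const_mul a
  · refine hincr _ ?_ ?_ ?_
    · filter_upwards [eventually_gt_atTop 1] with x hx using mul_pos ha (log_pos hx)
    · simpa [mul_div_assoc] using isLittleO_log_id_atTop.tendsto_div_nhds_zero.const_mul a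
    · simpa [mul_assoc] using (tendsto_log_mul_of_isBigO_rpow_neg hβ htail).const_mul a
end

section
/- Let F be a distribution function with 1-F regularly varying at infinity with index -α ∈ (-1,0), and suppose for all sufficiently large z and x ∈ [1-η,1] (for some η ∈ (0,1) small): (F(z) - F(zx))/(1 - F(z)) ≤ C(1-x). Then for any ε ∈ (0, min(α,1-α)), lim_{η→0} lim_{A→∞} sup_{z>A} (1-F(z))^{-1} ∫_{(1-η,1]} (1-x)^{α-ε-1} dF_z(x) = 0, where F_z(x) = F(zx). -/
/-!
With `β = α - ε ∈ (0, 1)`, push `f.measure` forward along `u ↦ 1 - u / z` to a measure `ν`; the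
hypothesis becomes `ν [0, t) ≤ C (1 - f z) t` for `t ≤ η`. Cutting `[0, η)` into the dyadic shells
`[η / 2 ^ (k + 1), η / 2 ^ k)`, on which `t ^ (β - 1) ≤ (η / 2 ^ (k + 1)) ^ (β - 1)`, bounds the
normalised integral by `2 C η ^ β / (2 ^ β - 1)` for all large `z`, and this tends to `0` with `η`.
-/

open MeasureTheory Real Set Filter

theorem exists_mem_Ico_div_two_pow {t η : ℝ} (ht : 0 < t) (htη : t < η) :
    ∃ k : ℕ, t ∈ Ico (η / 2 ^ (k + 1)) (η / 2 ^ k) := by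
  have hex : ∃ k : ℕ, η / 2 ^ (k + 1) ≤ t := by
    obtain ⟨k, hk⟩ := pow_unbounded_of_one_lt (η / t) one_lt_two
    refine ⟨k, (div_le_iff₀ (by positivity)).2 ?_⟩
    rw [div_lt_iff₀ ht] at hk
    have : (2:ℝ) ^ k ≤ 2 ^ (k + 1) := pow_le_pow_right₀ one_le_two k.le_succ
    nlinarith
  refine ⟨Nat.find hex, Nat.find_spec hex, ?_⟩
  rcases hk : Nat.find hex with _ | j
  · simpa using htη
  · exact not_le.1 (Nat.find_min hex (hk ▸ Nat.lt_succ_self j))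

theorem hasSum_div_two_pow_succ_rpow {η β : ℝ} (hη : 0 ≤ η) (hβ : 0 < β) :
    HasSum (fun k : ℕ => (η / 2 ^ (k + 1)) ^ β) (η ^ β / (2 ^ β - 1)) := by
  have h2β : 1 < (2:ℝ) ^ β := one_lt_rpow (by norm_num) hβ
  have key : ∀ k : ℕ, (η / 2 ^ (k + 1)) ^ β = η ^ β * (2 ^ β)⁻¹ * ((2 ^ β)⁻¹) ^ k := by
    intro k
    rw [div_rpow hη (by positivity), ← rpow_natCast, ← rpow_mul zero_le_two, mul_comm,
      rpow_mul zero_le_two, rpow_natCast, inv_pow, pow_succ]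
    field_simp
  have hsum := (hasSum_geometric_of_lt_one (by positivity) (inv_lt_one_of_one_lt₀ h2β)).mul_left
    (η ^ β * (2 ^ β)⁻¹)
  have hsub : (2:ℝ) ^ β - 1 ≠ 0 := by linarith
  rwa [← funext key, show η ^ β * (2 ^ β)⁻¹ * (1 - (2 ^ β)⁻¹)⁻¹ = η ^ β / (2 ^ β - 1) by
    field_simp] at hsum

theorem setLIntegral_Ico_rpow_le (ν : Measure ℝ) {β M a : ℝ} (hβ : β ≤ 1) (ha : 0 < a)
    (hν : ν (Ico 0 (2 * a)) ≤ ENNReal.ofReal (M * (2 * a))) :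
    ∫⁻ t in Ico a (2 * a), ENNReal.ofReal (t ^ (β - 1)) ∂ν ≤ ENNReal.ofReal (2 * M * a ^ β) := by
  calc ∫⁻ t in Ico a (2 * a), ENNReal.ofReal (t ^ (β - 1)) ∂ν
      ≤ ∫⁻ _ in Ico a (2 * a), ENNReal.ofReal (a ^ (β - 1)) ∂ν := by
        refine setLIntegral_mono' measurableSet_Ico fun t ht => ENNReal.ofReal_le_ofReal ?_
        exact rpow_le_rpow_of_nonpos ha ht.1 (by linarith)
    _ = ENNReal.ofReal (a ^ (β - 1)) * ν (Ico a (2 * a)) := setLIntegral_const _ _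
    _ ≤ ENNReal.ofReal (a ^ (β - 1)) * ENNReal.ofReal (M * (2 * a)) := by
        gcongr
        exact (measure_mono (Ico_subset_Ico_left ha.le)).trans hν
    _ = ENNReal.ofReal (2 * M * a ^ β) := by
        rw [← ENNReal.ofReal_mul (by positivity), rpow_sub_one ha.ne']
        congr 1
        field_simp

theorem setLIntegral_Ico_zero_rpow_le (ν : Measure ℝ) {β M η : ℝ} (hβ : 0 < β) (hβ1 : β < 1)
    (hM : 0 ≤ M) (hη : 0 < η) (hν : ∀ t ∈ Ioc 0 η, ν (Ico 0 t) ≤ ENNReal.ofReal (M * t)) :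
    ∫⁻ t in Ico 0 η, ENNReal.ofReal (t ^ (β - 1)) ∂ν
      ≤ ENNReal.ofReal (2 * M * (η ^ β / (2 ^ β - 1))) := by
  set s : ℕ → Set ℝ := fun k => Ico (η / 2 ^ (k + 1)) (η / 2 ^ k)
  have hcover : Ico 0 η ⊆ {0} ∪ ⋃ k, s k := by
    rintro t ⟨ht0, htη⟩
    rcases ht0.eq_or_lt with rfl | ht0
    · exact Or.inl rfl
    · exact Or.inr (mem_iUnion.2 (exists_mem_Ico_div_two_pow ht0 htη))
  have hshell : ∀ k, ∫⁻ t in s k, ENNReal.ofReal (t ^ (β - 1)) ∂ν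
      ≤ ENNReal.ofReal (2 * M * (η / 2 ^ (k + 1)) ^ β) := by
    intro k
    have hk : η / 2 ^ k = 2 * (η / 2 ^ (k + 1)) := by rw [pow_succ]; field_simp
    simp only [s, hk]
    refine setLIntegral_Ico_rpow_le ν hβ1.le (by positivity) (hν _ ⟨by positivity, ?_⟩)
    rw [← hk]
    exact div_le_self hη.le (one_le_pow₀ one_le_two)
  -- Real powers have `0 ^ (β - 1) = 0`, so an atom of `ν` at `0` costs nothing.
  have hzero : ∫⁻ t in {0}, ENNReal.ofReal (t ^ (β - 1)) ∂ν = 0 := by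
    rw [lintegral_singleton, zero_rpow (by linarith), ENNReal.ofReal_zero, zero_mul]
  have hsum := (hasSum_div_two_pow_succ_rpow hη.le hβ).mul_left (2 * M)
  calc ∫⁻ t in Ico 0 η, ENNReal.ofReal (t ^ (β - 1)) ∂ν
      ≤ ∫⁻ t in {0} ∪ ⋃ k, s k, ENNReal.ofReal (t ^ (β - 1)) ∂ν := lintegral_mono_set hcover
    _ ≤ ∫⁻ t in {0}, ENNReal.ofReal (t ^ (β - 1)) ∂ν
          + ∫⁻ t in ⋃ k, s k, ENNReal.ofReal (t ^ (β - 1)) ∂ν := lintegral_union_le _ _ _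
    _ ≤ ∑' k, ∫⁻ t in s k, ENNReal.ofReal (t ^ (β - 1)) ∂ν := by
        rw [hzero, zero_add]
        exact lintegral_iUnion_le _ _
    _ ≤ ∑' k, ENNReal.ofReal (2 * M * (η / 2 ^ (k + 1)) ^ β) := ENNReal.tsum_le_tsum hshell
    _ = ENNReal.ofReal (2 * M * (η ^ β / (2 ^ β - 1))) := by
        rw [← hsum.tsum_eq, ENNReal.ofReal_tsum_of_nonneg (fun k => by positivity) hsum.summable]

theorem preimage_one_sub_div_Ico {z : ℝ} (hz : 0 < z) (t : ℝ) :
    (fun u => 1 - u / z) ⁻¹' Ico 0 t = Ioc (z * (1 - t)) z := by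
  ext u
  simp only [mem_preimage, mem_Ico, mem_Ioc, sub_nonneg, div_le_one hz, sub_lt_comm,
    lt_div_iff₀ hz]
  constructor <;> rintro ⟨h1, h2⟩ <;> constructor <;> linarith

theorem StieltjesFunction.measure_map_one_sub_div_Ico (f : StieltjesFunction ℝ) {z : ℝ}
    (hz : 0 < z) (t : ℝ) :
    f.measure.map (fun u => 1 - u / z) (Ico 0 t) = ENNReal.ofReal (f z - f (z * (1 - t))) := by
  rw [Measure.map_apply (by fun_prop) measurableSet_Ico, preimage_one_sub_div_Ico hz,
    StieltjesFunction.measure_Ioc]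

theorem StieltjesFunction.setIntegral_Ioc_one_sub_div_rpow_le (f : StieltjesFunction ℝ)
    {β C η z : ℝ} (hβ : 0 < β) (hβ1 : β < 1) (hη : 0 < η) (hz : 0 < z)
    (hcz : ∀ x ∈ Icc (1 - η) 1, f z - f (z * x) ≤ C * (1 - x) * (1 - f z)) :
    ∫ u in Ioc (z * (1 - η)) z, (1 - u / z) ^ (β - 1) ∂f.measure
      ≤ 2 * (C * (1 - f z)) * (η ^ β / (2 ^ β - 1)) := by
  have hmass : ∀ t ∈ Ioc 0 η, f z - f (z * (1 - t)) ≤ C * (1 - f z) * t := fun t ht => by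
    simpa [mul_right_comm] using hcz (1 - t) ⟨by linarith [ht.2], by linarith [ht.1]⟩
  have hM : 0 ≤ C * (1 - f z) := by
    refine nonneg_of_mul_nonneg_left ((sub_nonneg.2 (f.mono ?_)).trans (hmass η ⟨hη, le_rfl⟩)) hη
    nlinarith
  have hbound := setLIntegral_Ico_zero_rpow_le (f.measure.map fun u => 1 - u / z) hβ hβ1 hM hη
    fun t ht =>
      (f.measure_map_one_sub_div_Ico hz t).trans_le (ENNReal.ofReal_le_ofReal (hmass t ht))
  rw [setLIntegral_map measurableSet_Ico (by fun_prop) (by fun_prop),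
    preimage_one_sub_div_Ico hz] at hbound
  rw [integral_eq_lintegral_of_nonneg_ae _ (Measurable.aestronglyMeasurable (by fun_prop))]
  · have h2β : 0 < (2:ℝ) ^ β - 1 := sub_pos.2 (one_lt_rpow one_lt_two hβ)
    exact ENNReal.toReal_le_of_le_ofReal (by positivity) hbound
  · rw [EventuallyLE, ae_restrict_iff' measurableSet_Ioc]
    refine Eventually.of_forall fun u hu => rpow_nonneg ?_ _
    simpa [sub_nonneg] using (div_le_one hz).2 hu.2

theorem StieltjesFunction.inv_one_sub_mul_setIntegral_Ioc_mem_Icc (f : StieltjesFunction ℝ)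
    {β C η z : ℝ} (hβ : 0 < β) (hβ1 : β < 1) (hη : 0 < η) (hz : 0 < z) (hfz : f z < 1)
    (hcz : ∀ x ∈ Icc (1 - η) 1, f z - f (z * x) ≤ C * (1 - x) * (1 - f z)) :
    (1 - f z)⁻¹ * ∫ u in Ioc (z * (1 - η)) z, (1 - u / z) ^ (β - 1) ∂f.measure
      ∈ Icc 0 (2 * C * (η ^ β / (2 ^ β - 1))) := by
  have hD : 0 < 1 - f z := sub_pos.2 hfz
  refine ⟨mul_nonneg (inv_nonneg.2 hD.le) (setIntegral_nonneg measurableSet_Ioc fun u hu =>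
    rpow_nonneg (sub_nonneg.2 ((div_le_one hz).2 hu.2)) _), ?_⟩
  calc (1 - f z)⁻¹ * ∫ u in Ioc (z * (1 - η)) z, (1 - u / z) ^ (β - 1) ∂f.measure
      ≤ (1 - f z)⁻¹ * (2 * (C * (1 - f z)) * (η ^ β / (2 ^ β - 1))) :=
        mul_le_mul_of_nonneg_left (f.setIntegral_Ioc_one_sub_div_rpow_le hβ hβ1 hη hz hcz)
          (inv_nonneg.2 hD.le)
    _ = 2 * C * (η ^ β / (2 ^ β - 1)) := by field_simp

theorem tendsto_limsup_of_eventually_mem_Icc {ι κ : Type*} {l : Filter ι} {l' : Filter κ}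
    [l'.NeBot] {g : ι → κ → ℝ} {h : ι → ℝ} (hh : Tendsto h l (nhds 0))
    (hg : ∀ᶠ i in l, ∀ᶠ j in l', g i j ∈ Icc 0 (h i)) :
    Tendsto (fun i => limsup (g i) l') l (nhds 0) := by
  refine tendsto_of_tendsto_of_tendsto_of_le_of_le' tendsto_const_nhds hh ?_ ?_ <;>
    filter_upwards [hg] with i hi
  · exact le_limsup_of_frequently_le (hi.mono fun _ hj => hj.1).frequently
      (isBoundedUnder_of_eventually_le (hi.mono fun _ hj => hj.2))
  · exact limsup_le_of_le (isCoboundedUnder_le_of_eventually_le _ (hi.mono fun _ hj => hj.1))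
      (hi.mono fun _ hj => hj.2)

theorem stmt_16_general (α ε : ℝ) (hα : α ∈ Set.Ioo (0:ℝ) 1) (hε : ε ∈ Set.Ioo 0 (min α (1 - α)))
    (f : StieltjesFunction ℝ) (hf1 : ∀ x, f x < 1)
    (C η₀ : ℝ) (hη₀ : η₀ ∈ Set.Ioo (0:ℝ) 1)
    (hcond : ∀ᶠ z in Filter.atTop, ∀ x ∈ Set.Icc (1 - η₀) 1,
      f z - f (z * x) ≤ C * (1 - x) * (1 - f z)) :
    Filter.Tendsto
      (fun η => Filter.limsup
        (fun z => (1 - f z)⁻¹ * ∫ u in Set.Ioc (z * (1 - η)) z, (1 - u / z) ^ (α - ε - 1) ∂f.measure)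
        Filter.atTop)
      (nhdsWithin 0 (Set.Ioi 0)) (nhds 0) := by
  have hβ : 0 < α - ε := by linarith [hε.2.trans_le (min_le_left _ _)]
  have hβ1 : α - ε < 1 := by linarith [hα.2, hε.1]
  have hbound : Tendsto (fun η : ℝ => 2 * C * (η ^ (α - ε) / (2 ^ (α - ε) - 1)))
      (nhdsWithin 0 (Ioi 0)) (nhds 0) := by
    simpa [zero_rpow hβ.ne'] using ((continuousAt_rpow_const 0 _ (Or.inr hβ.le)).tendsto.div_const
      _ |>.const_mul (2 * C)).mono_left nhdsWithin_le_nhds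
  refine tendsto_limsup_of_eventually_mem_Icc hbound ?_
  filter_upwards [Ioo_mem_nhdsGT hη₀.1] with η hη
  filter_upwards [hcond, eventually_gt_atTop 0] with z hzcond hz
  exact f.inv_one_sub_mul_setIntegral_Ioc_mem_Icc hβ hβ1 hη.1 hz (hf1 z)
    fun x hx => hzcond x ⟨by linarith [hx.1, hη.2], hx.2⟩

theorem stmt_16 (α ε : ℝ) (hα : α ∈ Set.Ioo (0:ℝ) 1) (hε : ε ∈ Set.Ioo 0 (min α (1 - α)))
    (f : StieltjesFunction ℝ) (hf1 : ∀ x, f x < 1)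
    (hrv : ∀ l : ℝ, 0 < l →
      Filter.Tendsto (fun x => (1 - f (l * x)) / (1 - f x)) Filter.atTop (nhds (l ^ (-α))))
    (C η₀ : ℝ) (hC : 0 < C) (hη₀ : η₀ ∈ Set.Ioo (0:ℝ) 1)
    (hcond : ∀ᶠ z in Filter.atTop, ∀ x ∈ Set.Icc (1 - η₀) 1,
      f z - f (z * x) ≤ C * (1 - x) * (1 - f z)) :
    Filter.Tendsto
      (fun η => Filter.limsup
        (fun z => (1 - f z)⁻¹ * ∫ u in Set.Ioc (z * (1 - η)) z, (1 - u / z) ^ (α - ε - 1) ∂f.measure)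
        Filter.atTop)
      (nhdsWithin 0 (Set.Ioi 0)) (nhds 0) :=
  stmt_16_general α ε hα hε f hf1 C η₀ hη₀ hcond
end
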